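/- Let 1 ≤ l ≤ m ≤ n, let e_1,…,e_l be an orthonormal basis of X ∈ G(n,l), and let h_1,…,h_l ∈ ℝ^n with |h_i − e_i| < ε < ε₁ := 10^{-1}(10^m+1)^{-1}. If Y = span(h_1,…,h_l), then ∠(X,Y) ≤ c₂ ε, where c₂ = 4m(10^m+1) and ∠(X,Y) = ‖π_X − π_Y‖ is the operator-norm distance between the orthogonal projections onto X and Y. -/

import Mathlib

/-! Orthonormalize `h` by Gram–Schmidt to `g`. By induction on `i`, `‖g i - e i‖ ≤ 10 ^ (i + 1) ε`:
the `i`-th Gram–Schmidt vector differs from `h i` by the projections of `h i` onto the earlier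
`g j`, and `⟪g j, h i⟫ = ⟪g j - e j, h i⟫ + ⟪e j, h i - e i⟫` is small because `e j ⊥ e i`.
Finally `π_X = ∑ ⟪e i, ·⟫ e i` and `π_Y = ∑ ⟪g i, ·⟫ g i`, and each difference of these rank-one
terms has norm at most `2 ‖g i - e i‖`. -/

/-- The orthogonal projection onto a subspace of Euclidean space, viewed as a
continuous linear endomorphism of the ambient space. -/
noncomputable def projL {n : ℕ} (X : Submodule ℝ (EuclideanSpace ℝ (Fin n))) :
    EuclideanSpace ℝ (Fin n) →L[ℝ] EuclideanSpace ℝ (Fin n) :=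
  X.subtypeL.comp X.orthogonalProjection

open Finset Submodule InnerProductSpace

theorem sum_Iio_ten_pow_succ_le {l : ℕ} (i : Fin l) :
    ∑ j ∈ Iio i, (10 : ℝ) ^ ((j : ℕ) + 1) ≤ 10 ^ ((i : ℕ) + 1) / 9 := by
  have hrange : ∑ j ∈ Iio i, (10 : ℝ) ^ ((j : ℕ) + 1) = ∑ k ∈ range i, (10 : ℝ) ^ (k + 1) := by
    rw [← Nat.Iio_eq_range, ← Fin.map_valEmbedding_Iio, sum_map]
    rfl
  rw [hrange]
  have := geom_sum_mul (10 : ℝ) i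
  simp only [pow_succ, ← sum_mul]
  nlinarith

theorem ten_pow_mul_lt_one {m : ℕ} {ε : ℝ} (hε : ε < 10⁻¹ * ((10 : ℝ) ^ m + 1)⁻¹) :
    10 ^ m * ε < 1 := by
  have h10 : (10 : ℝ) ^ m * ((10 : ℝ) ^ m + 1)⁻¹ ≤ 1 := by
    rw [mul_inv_le_iff₀ (by positivity)]; linarith
  nlinarith [pow_pos (show (0 : ℝ) < 10 by norm_num) m]

section InnerProductSpace

variable {𝕜 E : Type*} [RCLike 𝕜] [NormedAddCommGroup E] [InnerProductSpace 𝕜 E]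

theorem norm_rankOne_self_sub_rankOne_self_le (a b : E) :
    ‖rankOne 𝕜 a a - rankOne 𝕜 b b‖ ≤ (‖a‖ + ‖b‖) * ‖a - b‖ := by
  have hsplit : rankOne 𝕜 a a - rankOne 𝕜 b b = rankOne 𝕜 a (a - b) + rankOne 𝕜 (a - b) b := by
    simp only [map_sub, sub_apply]
    abel
  calc ‖rankOne 𝕜 a a - rankOne 𝕜 b b‖
      ≤ ‖rankOne 𝕜 a (a - b)‖ + ‖rankOne 𝕜 (a - b) b‖ := hsplit ▸ norm_add_le _ _
    _ = (‖a‖ + ‖b‖) * ‖a - b‖ := by simp only [norm_rankOne]; ring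

theorem Orthonormal.starProjection_span_eq_sum_rankOne {ι : Type*} [Fintype ι] {v : ι → E}
    (hv : Orthonormal 𝕜 v) [(span 𝕜 (Set.range v)).HasOrthogonalProjection] :
    (span 𝕜 (Set.range v)).starProjection = ∑ i, rankOne 𝕜 (v i) (v i) := by
  let b := Module.Basis.span hv.linearIndependent
  have hb : Orthonormal 𝕜 b := by
    convert orthonormal_span hv with i
    exact congrArg Subtype.val (Module.Basis.span_apply hv.linearIndependent i)
  simpa only [b, Module.Basis.coe_toOrthonormalBasis, Module.Basis.span_apply] using
    (b.toOrthonormalBasis hb).starProjection_eq_sum_rankOne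

theorem norm_starProjection_span_sub_le {ι : Type*} [Fintype ι] {v w : ι → E}
    (hv : Orthonormal 𝕜 v) (hw : Orthonormal 𝕜 w)
    [(span 𝕜 (Set.range v)).HasOrthogonalProjection]
    [(span 𝕜 (Set.range w)).HasOrthogonalProjection] :
    ‖(span 𝕜 (Set.range v)).starProjection - (span 𝕜 (Set.range w)).starProjection‖ ≤
      2 * ∑ i, ‖v i - w i‖ := by
  rw [hv.starProjection_span_eq_sum_rankOne, hw.starProjection_span_eq_sum_rankOne,
    ← sum_sub_distrib, mul_sum]
  refine (norm_sum_le _ _).trans (sum_le_sum fun i _ => ?_)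
  calc _ ≤ (‖v i‖ + ‖w i‖) * ‖v i - w i‖ := norm_rankOne_self_sub_rankOne_self_le _ _
    _ = 2 * ‖v i - w i‖ := by rw [hv.1 i, hw.1 i]; norm_num

theorem norm_inv_norm_smul_sub_le {x e : E} (he : ‖e‖ = 1) :
    ‖(‖x‖⁻¹ : 𝕜) • x - e‖ ≤ 2 * ‖x - e‖ := by
  rcases eq_or_ne x 0 with rfl | hx
  · simp [he]
  have hrescale : ‖(‖x‖⁻¹ : 𝕜) • x - x‖ = |1 - ‖x‖| := by
    have hx' : 0 < ‖x‖ := norm_pos_iff.2 hx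
    rw [show (‖x‖⁻¹ : 𝕜) • x - x = ((‖x‖⁻¹ - 1 : ℝ) : 𝕜) • x by simp [sub_smul], norm_smul,
      RCLike.norm_ofReal, show ‖x‖⁻¹ - 1 = (1 - ‖x‖) / ‖x‖ by field_simp, abs_div,
      abs_of_pos hx', div_mul_cancel₀ _ hx'.ne']
  have hnorm : |1 - ‖x‖| ≤ ‖x - e‖ := by
    simpa only [he, abs_sub_comm] using abs_norm_sub_norm_le x e
  calc ‖(‖x‖⁻¹ : 𝕜) • x - e‖ ≤ ‖(‖x‖⁻¹ : 𝕜) • x - x‖ + ‖x - e‖ :=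
        norm_sub_le_norm_sub_add_norm_sub _ _ _
    _ ≤ 2 * ‖x - e‖ := by linarith

theorem norm_inv_norm_smul_le_one (u : E) : ‖(‖u‖⁻¹ : 𝕜) • u‖ ≤ 1 := by
  rcases eq_or_ne u 0 with rfl | hu
  · simp
  · exact (norm_smul_inv_norm hu).le

theorem starProjection_singleton_eq_inner_smul (u x : E) :
    (𝕜 ∙ u).starProjection x = inner 𝕜 ((‖u‖⁻¹ : 𝕜) • u) x • ((‖u‖⁻¹ : 𝕜) • u) := by
  rw [starProjection_singleton, inner_smul_left, smul_smul]
  congr 1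
  simp only [pow_two, map_mul, div_eq_mul_inv, mul_inv_rev, map_inv₀, RCLike.conj_ofReal]
  ring

theorem norm_starProjection_singleton_le (u : E) {x a b : E} (ha : ‖a‖ = 1)
    (hab : inner 𝕜 a b = 0) :
    ‖(𝕜 ∙ u).starProjection x‖ ≤ ‖(‖u‖⁻¹ : 𝕜) • u - a‖ * ‖x‖ + ‖x - b‖ := by
  set g := (‖u‖⁻¹ : 𝕜) • u
  have hsplit : inner 𝕜 g x = inner 𝕜 (g - a) x + inner 𝕜 a (x - b) := by
    simp [inner_sub_left, inner_sub_right, hab]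
  calc ‖(𝕜 ∙ u).starProjection x‖ = ‖inner 𝕜 g x‖ * ‖g‖ := by
        rw [starProjection_singleton_eq_inner_smul, norm_smul]
    _ ≤ ‖inner 𝕜 g x‖ := mul_le_of_le_one_right (norm_nonneg _) (norm_inv_norm_smul_le_one u)
    _ ≤ ‖g - a‖ * ‖x‖ + ‖a‖ * ‖x - b‖ := by
        rw [hsplit]
        exact (norm_add_le _ _).trans (add_le_add (norm_inner_le_norm _ _) (norm_inner_le_norm _ _))
    _ = ‖g - a‖ * ‖x‖ + ‖x - b‖ := by rw [ha, one_mul]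

section GramSchmidt

variable {ι : Type*} [LinearOrder ι] [LocallyFiniteOrderBot ι] [WellFoundedLT ι]

theorem norm_gramSchmidt_sub_le {e : ι → E} (he : Orthonormal 𝕜 e) (f : ι → E) (i : ι) :
    ‖gramSchmidt 𝕜 f i - e i‖ ≤
      ‖f i - e i‖ + ∑ j ∈ Iio i, (‖gramSchmidtNormed 𝕜 f j - e j‖ * ‖f i‖ + ‖f i - e i‖) := by
  rw [gramSchmidt_def, sub_right_comm]
  refine (norm_sub_le _ _).trans (add_le_add_right (norm_sum_le_of_le _ fun j hj => ?_) _)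
  exact norm_starProjection_singleton_le _ (he.1 j) (he.2 (mem_Iio.1 hj).ne)

theorem orthonormal_gramSchmidtNormed {f : ι → E} (hf : ∀ i, gramSchmidtNormed 𝕜 f i ≠ 0) :
    Orthonormal 𝕜 (gramSchmidtNormed 𝕜 f) :=
  ⟨fun i => gramSchmidtNormed_unit_length' (hf i), fun i j hij => by
    simp [gramSchmidtNormed, inner_smul_left, inner_smul_right, gramSchmidt_orthogonal 𝕜 f hij]⟩

end GramSchmidt

theorem norm_gramSchmidtNormed_sub_le {l : ℕ} {e f : Fin l → E} (he : Orthonormal 𝕜 e) {ε : ℝ}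
    (hf : ∀ i, ‖f i - e i‖ ≤ ε) (hε : ε ≤ 9 / 10) (i : Fin l) :
    ‖gramSchmidtNormed 𝕜 f i - e i‖ ≤ 10 ^ ((i : ℕ) + 1) * ε := by
  induction i using WellFoundedLT.induction with
  | _ i ih =>
  have hε0 : 0 ≤ ε := (norm_nonneg _).trans (hf i)
  have hfi : ‖f i‖ ≤ 1 + ε := by
    linarith [norm_le_norm_add_norm_sub' (f i) (e i), hf i, he.1 i]
  have hterm : ∀ j ∈ Iio i, ‖gramSchmidtNormed 𝕜 f j - e j‖ * ‖f i‖ + ‖f i - e i‖ ≤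
      2 * (10 : ℝ) ^ ((j : ℕ) + 1) * ε := by
    intro j hj
    have hj := ih j (mem_Iio.1 hj)
    have h10 : (10 : ℝ) ≤ 10 ^ ((j : ℕ) + 1) := le_self_pow₀ (by norm_num) (by omega)
    calc _ ≤ 10 ^ ((j : ℕ) + 1) * ε * (1 + ε) + ε :=
          add_le_add (mul_le_mul hj hfi (norm_nonneg _) (by positivity)) (hf i)
      _ ≤ 2 * (10 : ℝ) ^ ((j : ℕ) + 1) * ε := by
          nlinarith [mul_nonneg (mul_nonneg hε0 (sub_nonneg.2 hε)) (h10.trans' (by norm_num)),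
            mul_nonneg hε0 (sub_nonneg.2 h10)]
  have hu : ‖gramSchmidt 𝕜 f i - e i‖ ≤ 10 ^ ((i : ℕ) + 1) * ε / 2 := by
    have hgeom := sum_Iio_ten_pow_succ_le i
    have h10 : (10 : ℝ) ≤ 10 ^ ((i : ℕ) + 1) := le_self_pow₀ (by norm_num) (by omega)
    calc _ ≤ ε + ∑ j ∈ Iio i, 2 * (10 : ℝ) ^ ((j : ℕ) + 1) * ε :=
          (norm_gramSchmidt_sub_le he f i).trans (add_le_add (hf i) (sum_le_sum hterm))
      _ = ε + 2 * ε * ∑ j ∈ Iio i, (10 : ℝ) ^ ((j : ℕ) + 1) := by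
          rw [mul_sum]; congr 1; exact sum_congr rfl fun _ _ => by ring
      _ ≤ 10 ^ ((i : ℕ) + 1) * ε / 2 := by nlinarith
  calc _ ≤ 2 * ‖gramSchmidt 𝕜 f i - e i‖ := norm_inv_norm_smul_sub_le (he.1 i)
    _ ≤ 10 ^ ((i : ℕ) + 1) * ε := by linarith

end InnerProductSpace

theorem angle_span_perturbation_general {n m l : ℕ}
    (hl : 1 ≤ l) (hlm : l ≤ m)
    (X : Submodule ℝ (EuclideanSpace ℝ (Fin n)))
    (e : Fin l → EuclideanSpace ℝ (Fin n)) (he : Orthonormal ℝ e)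
    (heX : Submodule.span ℝ (Set.range e) = X)
    (h : Fin l → EuclideanSpace ℝ (Fin n)) (ε : ℝ)
    (hε : ε < 10⁻¹ * ((10 : ℝ) ^ m + 1)⁻¹)
    (hhe : ∀ i, ‖h i - e i‖ < ε)
    (Y : Submodule ℝ (EuclideanSpace ℝ (Fin n)))
    (hY : Y = Submodule.span ℝ (Set.range h)) :
    ‖projL X - projL Y‖ ≤ 4 * m * ((10 : ℝ) ^ m + 1) * ε := by
  have hε0 : 0 ≤ ε := (norm_nonneg _).trans (hhe ⟨0, hl⟩).le
  have hpow : ∀ i : Fin l, (10 : ℝ) ^ ((i : ℕ) + 1) ≤ 10 ^ m := fun i =>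
    pow_le_pow_right₀ (by norm_num) (by omega)
  have hsmall := ten_pow_mul_lt_one hε
  have hε_le : ε ≤ 9 / 10 := by
    have h10 : (10 : ℝ) ≤ 10 ^ m := by simpa using hpow ⟨0, hl⟩
    nlinarith [mul_le_mul_of_nonneg_right h10 hε0]
  set g := gramSchmidtNormed ℝ h
  have hg : ∀ i, ‖g i - e i‖ ≤ 10 ^ m * ε := fun i =>
    (norm_gramSchmidtNormed_sub_le he (fun i => (hhe i).le) hε_le i).trans
      (mul_le_mul_of_nonneg_right (hpow i) hε0)
  have hg_ne : ∀ i, g i ≠ 0 := fun i hgi => by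
    have := hg i
    rw [hgi, zero_sub, norm_neg, he.1 i] at this
    linarith
  have hYg : Y = span ℝ (Set.range g) := by
    rw [hY, span_gramSchmidtNormed_range, span_gramSchmidt]
  subst heX hYg
  calc ‖(span ℝ (Set.range e)).starProjection - (span ℝ (Set.range g)).starProjection‖
      ≤ 2 * ∑ i, ‖e i - g i‖ :=
        norm_starProjection_span_sub_le he (orthonormal_gramSchmidtNormed hg_ne)
    _ ≤ 2 * ∑ _i : Fin l, 10 ^ m * ε := by gcongr with i; rw [norm_sub_rev]; exact hg i
    _ = 2 * l * (10 ^ m * ε) := by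
        simp only [sum_const, card_univ, Fintype.card_fin, nsmul_eq_mul]; ring
    _ ≤ 4 * m * ((10 : ℝ) ^ m + 1) * ε := by
        have hlm' : (l : ℝ) ≤ m := by exact_mod_cast hlm
        have hP : 0 ≤ (10 : ℝ) ^ m * ε := by positivity
        nlinarith [mul_le_mul_of_nonneg_right hlm' hP, mul_nonneg (Nat.cast_nonneg m) hε0]

/-- If `h_1, …, h_l` are `ε`-perturbations of an orthonormal basis `e_1, …, e_l` of
`X ∈ G(n,l)` with `ε < ε₁ = 1/(10(10^m+1))` and `Y = span(h_1, …, h_l)`, then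
`∠(X,Y) = ‖π_X − π_Y‖ ≤ c₂ ε` with `c₂ = 4m(10^m+1)`. -/
theorem angle_span_perturbation {n m l : ℕ}
    (hl : 1 ≤ l) (hlm : l ≤ m) (hmn : m ≤ n)
    (X : Submodule ℝ (EuclideanSpace ℝ (Fin n))) (hX : Module.finrank ℝ X = l)
    (e : Fin l → EuclideanSpace ℝ (Fin n)) (he : Orthonormal ℝ e)
    (heX : Submodule.span ℝ (Set.range e) = X)
    (h : Fin l → EuclideanSpace ℝ (Fin n)) (ε : ℝ)
    (hε : ε < 10⁻¹ * ((10 : ℝ) ^ m + 1)⁻¹)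
    (hhe : ∀ i, ‖h i - e i‖ < ε)
    (Y : Submodule ℝ (EuclideanSpace ℝ (Fin n)))
    (hY : Y = Submodule.span ℝ (Set.range h)) :
    ‖projL X - projL Y‖ ≤ 4 * m * ((10 : ℝ) ^ m + 1) * ε :=
  angle_span_perturbation_general hl hlm X e he heX h ε hε hhe Y hY
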